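/- Suppose that μ-almost everywhere the conditional expectation of G' given the σ-algebra 𝒢 generated by (S_t, R_{t+1}, S_{t+1}) equals j(S_{t+1}). Define the TD error δ = R_{t+1} + γ(S_{t+1})·j(S_{t+1}) − j(S_t). Then for every state s with μ(S_t = s) > 0, E[ γ(S_{t+1})·λ(S_{t+1})·δ·(G' − j(S_{t+1})) | S_t = s ] = 0. -/

import Mathlib

open MeasureTheory ProbabilityTheory
open scoped ENNReal

/-! On `{S_t = s}` the weight `γ(S_{t+1}) λ(S_{t+1}) δ` is a function of `(S_t, R_{t+1}, S_{t+1})`,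
hence `𝒢`-measurable, and it is bounded because `R_{t+1}` is bounded and `S` is finite. Pulling it
out of the conditional expectation shows that it is orthogonal to `G' - E[G' | 𝒢] = G' - j(S_{t+1})`. -/

namespace MeasureTheory

variable {Ω : Type*} {m m₀ : MeasurableSpace Ω} {μ : Measure Ω}

theorem memLp_top_comp_of_finite {S : Type*} [Finite S] [MeasurableSpace S]
    [MeasurableSingletonClass S] {X : Ω → S} (hX : Measurable X) (f : S → ℝ) :
    MemLp (fun ω => f (X ω)) ∞ μ := by
  obtain ⟨C, hC⟩ := Finite.exists_le (fun a => ‖f a‖)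
  exact memLp_top_of_bound ((measurable_of_finite f).comp hX).aestronglyMeasurable C
    (.of_forall fun ω => hC (X ω))

theorem integral_mul_sub_condExp_eq_zero (hm : m ≤ m₀) [SigmaFinite (μ.trim hm)]
    {F G : Ω → ℝ} (hF : StronglyMeasurable[m] F) (hF_top : MemLp F ∞ μ) (hG : Integrable G μ) :
    ∫ ω, F ω * (G ω - μ[G|m] ω) ∂μ = 0 := by
  have hFG : Integrable (F * G) μ := hG.mul_of_top_right hF_top
  have hFcG : Integrable (F * μ[G|m]) μ := integrable_condExp.mul_of_top_right hF_top
  calc ∫ ω, F ω * (G ω - μ[G|m] ω) ∂μ = ∫ ω, (F * G) ω ∂μ - ∫ ω, (F * μ[G|m]) ω ∂μ := by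
        simp_rw [mul_sub]; exact integral_sub hFG hFcG
    _ = ∫ ω, μ[F * G|m] ω ∂μ - ∫ ω, (F * μ[G|m]) ω ∂μ := by rw [integral_condExp hm]
    _ = 0 := by rw [integral_congr_ae (condExp_mul_of_stronglyMeasurable_left hF hFG hG), sub_self]

theorem integral_cond_mul_sub_eq_zero_of_condExp_ae_eq (hm : m ≤ m₀) [SigmaFinite (μ.trim hm)]
    {A : Set Ω} (hA : MeasurableSet[m] A) {F G H : Ω → ℝ} (hF : StronglyMeasurable[m] F)
    (hF_top : MemLp F ∞ μ) (hG : Integrable G μ) (hH : μ[G|m] =ᵐ[μ] H) :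
    ∫ ω, F ω * (G ω - H ω) ∂μ[|A] = 0 := by
  have hA_indicator : ∫ ω, A.indicator F ω * (G ω - μ[G|m] ω) ∂μ = 0 :=
    integral_mul_sub_condExp_eq_zero hm (hF.indicator hA) (hF_top.indicator (hm A hA)) hG
  have hrestrict : ∫ ω in A, F ω * (G ω - H ω) ∂μ = 0 := by
    rw [← integral_indicator (hm A hA), ← hA_indicator]
    refine integral_congr_ae ?_
    filter_upwards [hH] with ω hω
    by_cases hωA : ω ∈ A <;> simp [hωA, hω]
  rw [ProbabilityTheory.cond, integral_smul_measure, hrestrict, smul_zero]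

end MeasureTheory

theorem td_error_orthogonality_general {Ω : Type*} [MeasurableSpace Ω] (μ : Measure Ω)
    [IsProbabilityMeasure μ]
    {S : Type*} [Fintype S] [MeasurableSpace S] [MeasurableSingletonClass S]
    (St St1 : Ω → S) (R G' : Ω → ℝ)
    (hSt : Measurable St) (hSt1 : Measurable St1)
    (hR : Measurable R)
    (hG'int : Integrable G' μ) (hRbd : ∃ C, ∀ ω, |R ω| ≤ C)
    (γ lam : S → ℝ)
    (j : S → ℝ)
    (hcond : μ[G' | MeasurableSpace.comap (fun ω => (St ω, R ω, St1 ω)) inferInstance]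
        =ᵐ[μ] fun ω => j (St1 ω))
    (δ : Ω → ℝ) (hδ : δ = fun ω => R ω + γ (St1 ω) * j (St1 ω) - j (St ω)) :
    ∀ s : S, 0 < μ {ω | St ω = s} →
      ∫ ω, γ (St1 ω) * lam (St1 ω) * δ ω * (G' ω - j (St1 ω))
          ∂(μ[|{ω | St ω = s}]) = 0 := by
  intro s _
  set X := fun ω => (St ω, R ω, St1 ω)
  have hXm : Measurable[MeasurableSpace.comap X inferInstance] X := comap_measurable X
  obtain ⟨C, hC⟩ := hRbd
  have hR_top : MemLp R ∞ μ :=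
    memLp_top_of_bound hR.aestronglyMeasurable C (.of_forall fun ω => hC ω)
  have hδ_top : MemLp δ ∞ μ := by
    rw [hδ]
    exact (hR_top.add (memLp_top_comp_of_finite hSt1 fun b => γ b * j b)).sub
      (memLp_top_comp_of_finite hSt j)
  have hF : Measurable[MeasurableSpace.comap X inferInstance]
      fun ω => γ (St1 ω) * lam (St1 ω) * δ ω := by
    have hφ : Measurable fun x : S × ℝ × S =>
        γ x.2.2 * lam x.2.2 * (x.2.1 + γ x.2.2 * j x.2.2 - j x.1) := by
      fun_prop (disch := exact measurable_of_finite _)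
    rw [hδ]
    exact hφ.comp hXm
  exact integral_cond_mul_sub_eq_zero_of_condExp_ae_eq (hSt.prodMk (hR.prodMk hSt1)).comap_le
    (measurable_fst.comp hXm (measurableSet_singleton s)) hF.stronglyMeasurable
    (hδ_top.mul' (memLp_top_comp_of_finite hSt1 fun b => γ b * lam b)) hG'int hcond

/-- If the conditional expectation of `G'` given the σ-algebra generated by
`(S_t, R_{t+1}, S_{t+1})` is `j (S_{t+1})` a.e., then with TD error
`δ = R_{t+1} + γ(S_{t+1})·j(S_{t+1}) − j(S_t)`, for every state `s` with `μ(S_t = s) > 0`,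
`E[ γ(S_{t+1})·λ(S_{t+1})·δ·(G' − j(S_{t+1})) | S_t = s ] = 0`. -/
theorem td_error_orthogonality {Ω : Type*} [MeasurableSpace Ω] (μ : Measure Ω)
    [IsProbabilityMeasure μ]
    {S : Type*} [Fintype S] [Nonempty S] [MeasurableSpace S] [MeasurableSingletonClass S]
    (St St1 : Ω → S) (R G' : Ω → ℝ)
    (hSt : Measurable St) (hSt1 : Measurable St1)
    (hR : Measurable R) (hG' : Measurable G')
    (hG'int : Integrable G' μ) (hRbd : ∃ C, ∀ ω, |R ω| ≤ C)
    (γ lam : S → ℝ) (hγ : ∀ s, γ s ∈ Set.Icc (0 : ℝ) 1) (hlam : ∀ s, lam s ∈ Set.Icc (0 : ℝ) 1)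
    (j : S → ℝ)
    (hcond : μ[G' | MeasurableSpace.comap (fun ω => (St ω, R ω, St1 ω)) inferInstance]
        =ᵐ[μ] fun ω => j (St1 ω))
    (δ : Ω → ℝ) (hδ : δ = fun ω => R ω + γ (St1 ω) * j (St1 ω) - j (St ω)) :
    ∀ s : S, 0 < μ {ω | St ω = s} →
      ∫ ω, γ (St1 ω) * lam (St1 ω) * δ ω * (G' ω - j (St1 ω))
          ∂(μ[|{ω | St ω = s}]) = 0 :=
  td_error_orthogonality_general μ St St1 R G' hSt hSt1 hR hG'int hRbd γ lam j hcond δ hδ
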